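/- Let M be a positive definite lattice containing a distinguished element 𝔬. Then the following three conditions are equivalent: (1) there is no element v ∈ M with either ((v.v) = 1 and (𝔬.v) = 1) or ((v.v) = 2 and (𝔬.v) = 0) (i.e., no sublattice K ⊆ M containing 𝔬 with Gram matrix K₂ = [[3,1],[1,1]] or K₆ = [[3,0],[0,2]] with respect to a basis (𝔬, v)); (2) M has no roots, i.e., there is no x ∈ M with (x.x) = 2; (3) (x.x) ≥ 3 for all nonzero x ∈ M. -/

import Mathlib

/-!
For every `x`, the vector `3 • x - (o.x) • o` is orthogonal to `o` and has norm
`9 (x.x) - 3 (o.x)²`, so evenness of `⟨o⟩⊥` forces `(x.x) ≡ (o.x) (mod 2)`. Together with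
Cauchy–Schwarz, `(o.x)² ≤ 3 (x.x)`, this pins down `(o.x)`: a root has `(o.x) ∈ {0, ±2}`
and yields `v = x` (for `0`) or `v = o ∓ x` (for `±2`); a vector of norm `1` has
`(o.x) = ±1`, and then `o - (o.x) • x` is a root.
-/

section BilinearForm

variable {M : Type*} [AddCommGroup M] [Module ℤ M] (B : M →ₗ[ℤ] M →ₗ[ℤ] ℤ)

lemma apply_smul_sub_smul_self (hsymm : ∀ x y : M, B x y = B y x) (a b : M) (m n : ℤ) :
    B (m • a - n • b) (m • a - n • b) = m ^ 2 * B a a - 2 * m * n * B a b + n ^ 2 * B b b := by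
  simp only [map_sub, map_zsmul, LinearMap.sub_apply, LinearMap.smul_apply, smul_eq_mul,
    hsymm b a]
  ring

lemma apply_sub_smul_self (hsymm : ∀ x y : M, B x y = B y x) (a b : M) (n : ℤ) :
    B (a - n • b) (a - n • b) = B a a - 2 * n * B a b + n ^ 2 * B b b := by
  simpa using apply_smul_sub_smul_self B hsymm a b 1 n

lemma sq_apply_le_mul_apply_self (hsymm : ∀ x y : M, B x y = B y x)
    (hpos : ∀ x : M, x ≠ 0 → 0 < B x x) (x y : M) :
    B x y ^ 2 ≤ B x x * B y y := by
  have hnonneg (z : M) : 0 ≤ B z z := by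
    rcases eq_or_ne z 0 with rfl | hz
    · simp
    · exact (hpos z hz).le
  rcases eq_or_ne x 0 with rfl | hx
  · simp
  have key : B (B x x • y - B x y • x) (B x x • y - B x y • x)
      = B x x * (B x x * B y y - B x y ^ 2) := by
    rw [apply_smul_sub_smul_self B hsymm, hsymm y x]
    ring
  have := hnonneg (B x x • y - B x y • x)
  rw [key] at this
  nlinarith [hpos x hx]

end BilinearForm

section Distinguished

variable {M : Type*} [AddCommGroup M] [Module ℤ M] {B : M →ₗ[ℤ] M →ₗ[ℤ] ℤ} {o : M}

lemma even_apply_self_iff_even_apply (hsymm : ∀ x y : M, B x y = B y x) (ho3 : B o o = 3)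
    (hoEven : ∀ x : M, B x o = 0 → Even (B x x)) (x : M) :
    Even (B x x) ↔ Even (B o x) := by
  have horth : B ((3 : ℤ) • x - B o x • o) o = 0 := by
    simp only [map_sub, map_zsmul, LinearMap.sub_apply, LinearMap.smul_apply, smul_eq_mul,
      hsymm x o, ho3]
    ring
  have hnorm : B ((3 : ℤ) • x - B o x • o) ((3 : ℤ) • x - B o x • o)
      = 9 * B x x - 3 * B o x ^ 2 := by
    rw [apply_smul_sub_smul_self B hsymm, hsymm x o, ho3]
    ring
  have := hoEven _ horth
  rw [hnorm] at this
  simpa [Int.even_sub, parity_simps, show ¬ Even (9 : ℤ) by decide,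
    show ¬ Even (3 : ℤ) by decide] using this

lemma exists_K2_or_K6_of_root (hsymm : ∀ x y : M, B x y = B y x)
    (hpos : ∀ x : M, x ≠ 0 → 0 < B x x) (ho3 : B o o = 3)
    (hoEven : ∀ x : M, B x o = 0 → Even (B x x)) {x : M} (hx : B x x = 2) :
    ∃ v : M, (B v v = 1 ∧ B o v = 1) ∨ (B v v = 2 ∧ B o v = 0) := by
  obtain ⟨s, hs⟩ : Even (B o x) :=
    (even_apply_self_iff_even_apply hsymm ho3 hoEven x).mp (by rw [hx]; decide)
  have hcs := sq_apply_le_mul_apply_self B hsymm hpos o x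
  rw [ho3, hx, hs] at hcs
  have hs_le : -1 ≤ s ∧ s ≤ 1 := by constructor <;> nlinarith
  rcases eq_or_ne s 0 with rfl | hs0
  · exact ⟨x, Or.inr ⟨hx, by simpa using hs⟩⟩
  have hs_sq : s ^ 2 = 1 := by
    obtain ⟨h1, h2⟩ := hs_le
    interval_cases s <;> simp_all
  refine ⟨o - s • x, Or.inl ⟨?_, ?_⟩⟩
  · rw [apply_sub_smul_self B hsymm, ho3, hs, hx]
    linear_combination (-2 : ℤ) * hs_sq
  · simp only [map_sub, map_zsmul, smul_eq_mul, ho3, hs]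
    linear_combination (-2 : ℤ) * hs_sq

lemma exists_root_of_apply_self_eq_one (hsymm : ∀ x y : M, B x y = B y x)
    (hpos : ∀ x : M, x ≠ 0 → 0 < B x x) (ho3 : B o o = 3)
    (hoEven : ∀ x : M, B x o = 0 → Even (B x x)) {x : M} (hx : B x x = 1) :
    ∃ y : M, B y y = 2 := by
  have hodd : ¬ Even (B o x) := by
    rw [← even_apply_self_iff_even_apply hsymm ho3 hoEven x, hx]
    decide
  have hcs := sq_apply_le_mul_apply_self B hsymm hpos o x
  rw [ho3, hx] at hcs
  have ht_sq : B o x ^ 2 = 1 := by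
    have h1 : -1 ≤ B o x := by nlinarith
    have h2 : B o x ≤ 1 := by nlinarith
    generalize B o x = t at *
    interval_cases t <;> simp_all
  refine ⟨o - B o x • x, ?_⟩
  rw [apply_sub_smul_self B hsymm, ho3, hx]
  linear_combination -ht_sq

end Distinguished

/-- Let `M` be a positive definite lattice containing a distinguished element `𝔬`.
The following are equivalent:
(1) there is no `v ∈ M` with either `((v.v) = 1 ∧ (𝔬.v) = 1)` or `((v.v) = 2 ∧ (𝔬.v) = 0)`
    (i.e. no sublattice containing `𝔬` with Gram matrix `K₂ = [[3,1],[1,1]]` or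
    `K₆ = [[3,0],[0,2]]` with respect to a basis `(𝔬, v)`);
(2) `M` has no roots, i.e. no `x ∈ M` with `(x.x) = 2`;
(3) `(x.x) ≥ 3` for all nonzero `x ∈ M`. -/
theorem no_K2_K6_iff_no_roots_iff_min_three
    {M : Type*} [AddCommGroup M] [Module ℤ M]
    (B : M →ₗ[ℤ] M →ₗ[ℤ] ℤ)
    (hsymm : ∀ x y : M, B x y = B y x)
    (hpos : ∀ x : M, x ≠ 0 → 0 < B x x)
    (o : M) (ho3 : B o o = 3)
    (hoEven : ∀ x : M, B x o = 0 → Even (B x x)) :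
    ((¬ ∃ v : M, (B v v = 1 ∧ B o v = 1) ∨ (B v v = 2 ∧ B o v = 0)) ↔
      ¬ ∃ x : M, B x x = 2) ∧
    ((¬ ∃ x : M, B x x = 2) ↔ ∀ x : M, x ≠ 0 → 3 ≤ B x x) := by
  refine ⟨⟨?_, ?_⟩, ?_, ?_⟩
  · rintro hK ⟨x, hx⟩
    exact hK (exists_K2_or_K6_of_root hsymm hpos ho3 hoEven hx)
  · rintro hR ⟨v, ⟨hv1, hov⟩ | ⟨hv2, -⟩⟩
    · refine hR ⟨o - (1 : ℤ) • v, ?_⟩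
      rw [apply_sub_smul_self B hsymm, ho3, hov, hv1]
      norm_num
    · exact hR ⟨v, hv2⟩
  · intro hR x hx
    by_contra! hlt
    obtain hx1 | hx2 : B x x = 1 ∨ B x x = 2 := by have := hpos x hx; omega
    · exact hR (exists_root_of_apply_self_eq_one hsymm hpos ho3 hoEven hx1)
    · exact hR ⟨x, hx2⟩
  · rintro hmin ⟨x, hx⟩
    have := hmin x (by rintro rfl; simp at hx)
    omega
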